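/- arXiv:1512.07702 — 4 statements merged into one kernel-verified Lean document; each statement's English description precedes it below -/
import Mathlib

section
/- Let R be a Hopf algebra over a commutative ring k whose antipode ι is an involution, let D be a right R-module, and let A be a left R-module. Then there is a natural isomorphism of k-modules D ⊗_R A ≅ k ⊗_R (D ⊗_k A), where k is a right R-module via the counit and D ⊗_k A is the left R-module described in the context. -/
open TensorProduct

section HopfSetup

variable (k : Type) [CommRing k] (R : Type) [Ring R] [HopfAlgebra k R]
variable (D : Type) [AddCommGroup D] [Module k D] [Module Rᵐᵒᵖ D] [IsScalarTower k Rᵐᵒᵖ D]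
variable (A : Type) [AddCommGroup A] [Module k A] [Module R A] [IsScalarTower k R A]

/-- The right action of `x : R` on a right `R`-module `D`, as a `k`-linear map. -/
def rightSmul (x : R) : D →ₗ[k] D where
  toFun d := MulOpposite.op x • d
  map_add' := smul_add _
  map_smul' c d := smul_comm _ c d

/-- The left action of `x : R` on a left `R`-module `A`, as a `k`-linear map. -/
def leftSmul (x : R) : A →ₗ[k] A where
  toFun a := x • a
  map_add' := smul_add _
  map_smul' c a := smul_comm _ c a

lemma rightSmul_add (x y : R) :
    rightSmul k R D (x + y) = rightSmul k R D x + rightSmul k R D y := by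
  ext d
  simp [rightSmul, add_smul]

lemma rightSmul_ksmul (c : k) (x : R) :
    rightSmul k R D (c • x) = c • rightSmul k R D x := by
  ext d
  simp only [rightSmul, LinearMap.coe_mk, AddHom.coe_mk, LinearMap.smul_apply]
  rw [MulOpposite.op_smul, smul_assoc]

lemma leftSmul_add (x y : R) :
    leftSmul k R A (x + y) = leftSmul k R A x + leftSmul k R A y := by
  ext a
  simp [leftSmul, add_smul]

lemma leftSmul_ksmul (c : k) (x : R) :
    leftSmul k R A (c • x) = c • leftSmul k R A x := by
  ext a
  simp only [leftSmul, LinearMap.coe_mk, AddHom.coe_mk, LinearMap.smul_apply]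
  rw [smul_assoc]

/-- The bilinear map `R × R → End_k(D ⊗_k A)` sending `(r₁, r₂)` to
`d ⊗ a ↦ (d · ι(r₁)) ⊗ (r₂ · a)`, where `ι` is the antipode. -/
noncomputable def sweedlerBilinear :
    R →ₗ[k] R →ₗ[k] ((D ⊗[k] A) →ₗ[k] (D ⊗[k] A)) :=
  LinearMap.mk₂ k
    (fun r₁ r₂ => TensorProduct.map
      (rightSmul k R D (HopfAlgebra.antipode (R := k) (A := R) r₁)) (leftSmul k R A r₂))
    (fun r r' s => by
      rw [map_add, rightSmul_add, TensorProduct.map_add_left])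
    (fun c r s => by
      rw [map_smul, rightSmul_ksmul, TensorProduct.map_smul_left])
    (fun r s s' => by
      rw [leftSmul_add, TensorProduct.map_add_right])
    (fun c r s => by
      rw [leftSmul_ksmul, TensorProduct.map_smul_right])

/-- The operator on `D ⊗_k A` induced by `r ∈ R` via the Sweedler-notation formula
`r · (d ⊗ a) = ∑ (d · ι(r₍₁₎)) ⊗ (r₍₂₎ · a)`. -/
noncomputable def sweedlerAction : R →ₗ[k] ((D ⊗[k] A) →ₗ[k] (D ⊗[k] A)) :=
  (TensorProduct.lift (sweedlerBilinear k R D A)).comp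
    (Coalgebra.comul (R := k) (A := R))

end HopfSetup
/-!
Both sides are quotients of `D ⊗_k A`, and the two submodules of relations coincide.
For `y = d ⊗ a`, the antipode axiom `∑ ι(r₁) r₂ = ε(r)` makes
`r · y - ε(r) y = ∑ (d · ι(r₁)) ⊗ r₂ a - d ⊗ ι(r₁) r₂ a` a sum of balancing relations.
Conversely, coassociativity together with `∑ r₁ ι(r₂) = ε(r)` and counitality gives
`∑ r₂ · ((d · r₁) ⊗ a) = d ⊗ r a` and `∑ ε(r₂) (d · r₁) ⊗ a = (d · r) ⊗ a`,
so `(d · r) ⊗ a - d ⊗ r a = -∑ (r₂ · y₁ - ε(r₂) y₁)` with `y₁ = (d · r₁) ⊗ a`.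
-/

open Coalgebra HopfAlgebra MulOpposite

lemma Coalgebra.sum_counit_right_smul {k C : Type*} [CommSemiring k] [AddCommMonoid C]
    [Module k C] [Coalgebra k C] {c : C} {ι : Type*} (ρ : Repr k c ι) :
    ∑ i ∈ ρ.index, counit (R := k) (ρ.right i) • ρ.left i = c := by
  simpa only [map_sum, TensorProduct.lift.tmul, LinearMap.flip_apply, LinearMap.lsmul_apply,
    one_smul] using congr(TensorProduct.lift (LinearMap.lsmul k C).flip $(sum_tmul_counit_eq ρ))

section

variable {k : Type} [CommRing k] {R : Type} [Ring R] [HopfAlgebra k R]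
variable {D : Type} [AddCommGroup D] [Module k D] [Module Rᵐᵒᵖ D] [IsScalarTower k Rᵐᵒᵖ D]
variable {A : Type} [AddCommGroup A] [Module k A] [Module R A] [IsScalarTower k R A]

lemma sweedlerAction_tmul {r : R} {ι : Type*} (ρ : Repr k r ι) (d : D) (a : A) :
    sweedlerAction k R D A r (d ⊗ₜ a) =
      ∑ i ∈ ρ.index, (op (antipode k (ρ.left i)) • d) ⊗ₜ (ρ.right i • a) := by
  simp [sweedlerAction, ← ρ.eq, sweedlerBilinear, rightSmul, leftSmul]

variable (k R) in
noncomputable def twistedActionMap (d : D) (a : A) : R ⊗[k] (R ⊗[k] R) →ₗ[k] D ⊗[k] A :=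
  TensorProduct.map ((opLinearEquiv k : R ≃ₗ[k] Rᵐᵒᵖ).toLinearMap.smulRight d)
      (LinearMap.id.smulRight a) ∘ₗ
    (LinearMap.mul' k R ∘ₗ (antipode k).lTensor R).rTensor R ∘ₗ
    (TensorProduct.assoc k R R R).symm.toLinearMap

lemma twistedActionMap_tmul (d : D) (a : A) (x u v : R) :
    twistedActionMap k R d a (x ⊗ₜ (u ⊗ₜ v)) = (op (x * antipode k u) • d) ⊗ₜ (v • a) := rfl

lemma sum_counit_smul_op_smul_tmul {M : Type*} [AddCommMonoid M] [Module k M] {r : R}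
    {ι : Type*} (ρ : Repr k r ι) (d : D) (m : M) :
    ∑ i ∈ ρ.index, counit (R := k) (ρ.right i) • ((op (ρ.left i) • d) ⊗ₜ[k] m) =
      (op r • d) ⊗ₜ m := by
  simp only [TensorProduct.smul_tmul', ← smul_assoc, ← op_smul, ← TensorProduct.sum_tmul,
    ← Finset.sum_smul, ← Finset.op_sum, sum_counit_right_smul]

lemma sum_sweedlerAction_op_smul_tmul {r : R} {ι : Type*} (ρ : Repr k r ι) (d : D) (a : A) :
    ∑ i ∈ ρ.index, sweedlerAction k R D A (ρ.right i) ((op (ρ.left i) • d) ⊗ₜ a) =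
      d ⊗ₜ (r • a) := by
  have hcoassoc := congr(twistedActionMap k R d a
    $(sum_tmul_tmul_eq ρ (fun i ↦ Repr.arbitrary k (ρ.left i))
      (fun i ↦ Repr.arbitrary k (ρ.right i))))
  simp only [map_sum, twistedActionMap_tmul] at hcoassoc
  calc ∑ i ∈ ρ.index, sweedlerAction k R D A (ρ.right i) ((op (ρ.left i) • d) ⊗ₜ a)
      = ∑ i ∈ ρ.index, ∑ j ∈ (Repr.arbitrary k (ρ.left i)).index,
          (op ((Repr.arbitrary k (ρ.left i)).left j *
            antipode k ((Repr.arbitrary k (ρ.left i)).right j)) • d) ⊗ₜ (ρ.right i • a) := by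
        rw [hcoassoc]
        refine Finset.sum_congr rfl fun i _ ↦ ?_
        rw [sweedlerAction_tmul (Repr.arbitrary k (ρ.right i))]
        simp only [smul_smul, op_mul]
    _ = ∑ i ∈ ρ.index, d ⊗ₜ (counit (R := k) (ρ.left i) • ρ.right i • a) := by
        refine Finset.sum_congr rfl fun i _ ↦ ?_
        rw [← TensorProduct.sum_tmul, ← Finset.sum_smul, ← Finset.op_sum,
          sum_mul_antipode_eq_smul, op_smul, op_one, smul_assoc, one_smul,
          TensorProduct.smul_tmul]
    _ = d ⊗ₜ (r • a) := by
        simp only [← TensorProduct.tmul_sum, ← smul_assoc, ← Finset.sum_smul, sum_counit_smul]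

variable (k R D A)

def balancedSubmodule : Submodule k (D ⊗[k] A) :=
  Submodule.span k {x | ∃ (r : R) (d : D) (a : A), x = (op r • d) ⊗ₜ[k] a - d ⊗ₜ[k] (r • a)}

def coinvariantSubmodule : Submodule k (D ⊗[k] A) :=
  Submodule.span k {x | ∃ (r : R) (y : D ⊗[k] A),
    x = sweedlerAction k R D A r y - counit (R := k) r • y}

variable {k R D A}

lemma op_smul_tmul_sub_tmul_smul_mem_coinvariantSubmodule (r : R) (d : D) (a : A) :
    (op r • d) ⊗ₜ[k] a - d ⊗ₜ[k] (r • a) ∈ coinvariantSubmodule k R D A := by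
  let ρ := Repr.arbitrary k r
  have h : (op r • d) ⊗ₜ[k] a - d ⊗ₜ[k] (r • a) = -∑ i ∈ ρ.index,
      (sweedlerAction k R D A (ρ.right i) ((op (ρ.left i) • d) ⊗ₜ a) -
        counit (R := k) (ρ.right i) • ((op (ρ.left i) • d) ⊗ₜ[k] a)) := by
    rw [Finset.sum_sub_distrib, sum_sweedlerAction_op_smul_tmul, sum_counit_smul_op_smul_tmul,
      neg_sub]
  rw [h]
  exact neg_mem <| Submodule.sum_mem _ fun i _ ↦ Submodule.subset_span ⟨_, _, rfl⟩

lemma sweedlerAction_tmul_sub_counit_smul_mem_balancedSubmodule (r : R) (d : D) (a : A) :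
    sweedlerAction k R D A r (d ⊗ₜ a) - counit (R := k) r • (d ⊗ₜ[k] a) ∈
      balancedSubmodule k R D A := by
  let ρ := Repr.arbitrary k r
  have h : sweedlerAction k R D A r (d ⊗ₜ a) - counit (R := k) r • (d ⊗ₜ[k] a) =
      ∑ i ∈ ρ.index, ((op (antipode k (ρ.left i)) • d) ⊗ₜ (ρ.right i • a) -
        d ⊗ₜ (antipode k (ρ.left i) • ρ.right i • a)) := by
    rw [Finset.sum_sub_distrib, ← sweedlerAction_tmul, ← TensorProduct.tmul_sum]
    simp only [← mul_smul, ← Finset.sum_smul, sum_antipode_mul_eq_smul, smul_assoc, one_smul,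
      TensorProduct.tmul_smul]
  rw [h]
  exact Submodule.sum_mem _ fun i _ ↦ Submodule.subset_span ⟨_, _, _, rfl⟩

lemma sweedlerAction_sub_counit_smul_mem_balancedSubmodule (r : R) (y : D ⊗[k] A) :
    sweedlerAction k R D A r y - counit (R := k) r • y ∈ balancedSubmodule k R D A := by
  induction y using TensorProduct.induction_on with
  | zero => simp
  | tmul d a => exact sweedlerAction_tmul_sub_counit_smul_mem_balancedSubmodule r d a
  | add y z hy hz =>
    rw [map_add, smul_add, add_sub_add_comm]
    exact add_mem hy hz

theorem balancedSubmodule_eq_coinvariantSubmodule :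
    balancedSubmodule k R D A = coinvariantSubmodule k R D A := by
  apply le_antisymm <;> rw [balancedSubmodule, coinvariantSubmodule, Submodule.span_le]
  · rintro _ ⟨r, d, a, rfl⟩
    exact op_smul_tmul_sub_tmul_smul_mem_coinvariantSubmodule r d a
  · rintro _ ⟨r, y, rfl⟩
    exact sweedlerAction_sub_counit_smul_mem_balancedSubmodule r y

end

theorem stmt2_general (k : Type) [CommRing k] (R : Type) [Ring R] [HopfAlgebra k R]
    (D : Type) [AddCommGroup D] [Module k D] [Module Rᵐᵒᵖ D] [IsScalarTower k Rᵐᵒᵖ D]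
    (A : Type) [AddCommGroup A] [Module k A] [Module R A] [IsScalarTower k R A]
    [Module R (D ⊗[k] A)]
    (hsmul : ∀ (r : R) (x : D ⊗[k] A), r • x = sweedlerAction k R D A r x) :
    Nonempty (
      ((D ⊗[k] A) ⧸ Submodule.span k {x : D ⊗[k] A |
          ∃ (r : R) (d : D) (a : A), x = (MulOpposite.op r • d) ⊗ₜ[k] a - d ⊗ₜ[k] (r • a)})
      ≃ₗ[k]
      ((D ⊗[k] A) ⧸ Submodule.span k {x : D ⊗[k] A |
          ∃ (r : R) (y : D ⊗[k] A), x = r • y - Coalgebra.counit (R := k) (A := R) r • y})) := by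
  have hcoinvariant : Submodule.span k {x : D ⊗[k] A |
      ∃ (r : R) (y : D ⊗[k] A), x = r • y - counit (R := k) r • y} =
        coinvariantSubmodule k R D A := by
    simp only [hsmul]
    rfl
  exact ⟨Submodule.quotEquivOfEq _ _
    (balancedSubmodule_eq_coinvariantSubmodule.trans hcoinvariant.symm)⟩

/-- Let `R` be a Hopf algebra over a commutative ring `k` whose antipode is
an involution, `D` a right `R`-module and `A` a left `R`-module, and endow `D ⊗_k A` with the
left `R`-module structure `r · (d ⊗ a) = ∑ (d · ι(r₍₁₎)) ⊗ (r₍₂₎ · a)`.  Then there is a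
natural isomorphism of `k`-modules `D ⊗_R A ≅ k ⊗_R (D ⊗_k A)`, where `k` is a right
`R`-module via the counit; here `D ⊗_R A` is realized as the quotient of `D ⊗_k A` by the
relations `(d · r) ⊗ a = d ⊗ (r · a)` and `k ⊗_R (D ⊗_k A)` as the quotient of `D ⊗_k A`
by the relations `r · y = ε(r) · y`. -/
theorem stmt2 (k : Type) [CommRing k] (R : Type) [Ring R] [HopfAlgebra k R]
    (hinv : ∀ x : R, HopfAlgebra.antipode (R := k) (A := R)
        (HopfAlgebra.antipode (R := k) (A := R) x) = x)
    (D : Type) [AddCommGroup D] [Module k D] [Module Rᵐᵒᵖ D] [IsScalarTower k Rᵐᵒᵖ D]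
    (A : Type) [AddCommGroup A] [Module k A] [Module R A] [IsScalarTower k R A]
    [Module R (D ⊗[k] A)]
    (hsmul : ∀ (r : R) (x : D ⊗[k] A), r • x = sweedlerAction k R D A r x) :
    Nonempty (
      ((D ⊗[k] A) ⧸ Submodule.span k {x : D ⊗[k] A |
          ∃ (r : R) (d : D) (a : A), x = (MulOpposite.op r • d) ⊗ₜ[k] a - d ⊗ₜ[k] (r • a)})
      ≃ₗ[k]
      ((D ⊗[k] A) ⧸ Submodule.span k {x : D ⊗[k] A |
          ∃ (r : R) (y : D ⊗[k] A), x = r • y - Coalgebra.counit (R := k) (A := R) r • y})) :=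
  stmt2_general k R D A hsmul
end

section
/- Let k be a field, V a finite-dimensional k-vector space, E = ⋀V, and S = Sym(V^*). Let A = E/I be a finite-dimensional cohomologically graded quotient of E with socle degree n (i.e., A^n ≠ 0 and A^j = 0 for j > n) having the EPY property. Then dim_k A^i ≥ C(n, i) (the binomial coefficient) for all 0 ≤ i ≤ n. -/
/-!
Since `A^n ≠ 0` and `A` is generated by an element `v` of degree `0`, some product
`e = x₁ ⋯ xₙ` of `n` vectors satisfies `e • v ≠ 0`. For an `i`-subset `s` of the positions let
`e_s` be the ordered subproduct. Multiplying by `e_{sᶜ}` kills `e_t • v` for every other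
`i`-subset `t` (a factor repeats) and sends `e_s • v` to `±e • v ≠ 0`, so the `C(n, i)`
elements `e_s • v` of `A^i` are linearly independent.
-/

open TensorProduct

/-- Left multiplication by the degree-one element `ι a ∈ ⋀V` corresponding to `a ∈ V`,
as a `k`-linear endomorphism of the `⋀V`-module `P`. -/
noncomputable def extMul (k : Type) [Field k] (V : Type) [AddCommGroup V] [Module k V]
    (P : Type) [AddCommGroup P] [Module k P]
    [Module (ExteriorAlgebra k V) P] [IsScalarTower k (ExteriorAlgebra k V) P]
    (a : V) : P →ₗ[k] P where
  toFun p := ExteriorAlgebra.ι k a • p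
  map_add' := smul_add _
  map_smul' c p := smul_comm _ c p

/-- The differential of the linear complex `L(P) = (P_• ⊗ S, d)` of free modules over the
polynomial ring `S = k[x_j : j ∈ ι] = Sym(V^*)` (where `V` has basis `(e_j)_{j ∈ ι}` and
`(x_j)` is the dual basis), given on the graded piece `P_i ⊗ S` by
`d(p ⊗ s) = ∑_j (e_j · p) ⊗ (x_j · s)`, assembled as a single `S`-linear endomorphism of
`S ⊗_k P`. -/
noncomputable def bggDifferential (k : Type) [Field k]
    (ι : Type) [Fintype ι] [DecidableEq ι]
    (V : Type) [AddCommGroup V] [Module k V] (b : Module.Basis ι k V)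
    (P : Type) [AddCommGroup P] [Module k P]
    [Module (ExteriorAlgebra k V) P] [IsScalarTower k (ExteriorAlgebra k V) P] :
    (MvPolynomial ι k ⊗[k] P) →ₗ[MvPolynomial ι k] (MvPolynomial ι k ⊗[k] P) :=
  ∑ j : ι, TensorProduct.AlgebraTensorModule.map
    (LinearMap.lsmul (MvPolynomial ι k) (MvPolynomial ι k) (MvPolynomial.X j))
    (extMul k V P (b j))

open ExteriorAlgebra Set.powersetCard

section SubsetProducts

variable {R : Type*} [CommRing R] {V : Type*} [AddCommGroup V] [Module R V]

theorem ExteriorAlgebra.ιMulti_family_of_card_eq {n p : ℕ} (x : Fin n → V)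
    (u : Set.powersetCard (Fin n) p) (h : p = n) :
    ιMulti_family R p x u = ιMulti R n x := by
  subst h
  have hu : ∀ j, j ∈ u.val := by
    rw [Finset.eq_univ_of_card u.val (by rw [card_eq, Fintype.card_fin])]
    exact Finset.mem_univ
  have hid : ⇑(ofFinEmbEquiv.symm u) = id :=
    (Finset.orderEmbOfFin_unique u.prop (f := id) hu strictMono_id).symm
  rw [ιMulti_family, hid, Function.comp_id]

theorem ExteriorAlgebra.exists_ιMulti_family_compl_mul {n m i : ℕ} (hm : m + i = n)
    (x : Fin n → V) (t : Set.powersetCard (Fin n) i) :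
    ∃ ε : ℤˣ, ιMulti_family R m x (compl (hm.trans (Fintype.card_fin n).symm) t) *
      ιMulti_family R i x t = ε • ιMulti R n x := by
  have hdisj : Disjoint (compl (hm.trans (Fintype.card_fin n).symm) t).val t.val := by
    rw [coe_compl]
    exact disjoint_compl_left
  exact ⟨_, by rw [ιMulti_family_mul_of_disjoint R x _ _ hdisj, ιMulti_family_of_card_eq x _ hm]⟩

end SubsetProducts

theorem ExteriorAlgebra.linearIndependent_ιMulti_family_smul {k : Type*} [Field k]
    {V : Type*} [AddCommGroup V] [Module k V] {M : Type*} [AddCommGroup M] [Module k M]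
    [Module (ExteriorAlgebra k V) M] [IsScalarTower k (ExteriorAlgebra k V) M]
    {n : ℕ} (x : Fin n → V) {w : M} (hw : ιMulti k n x • w ≠ 0) (i : ℕ) :
    LinearIndependent k (fun s : Set.powersetCard (Fin n) i => ιMulti_family k i x s • w) := by
  rcases lt_or_ge n i with hni | hin
  · have : IsEmpty (Set.powersetCard (Fin n) i) :=
      ⟨fun s => (card_eq s ▸ s.val.card_le_univ).not_gt (by rwa [Fintype.card_fin])⟩
    exact linearIndependent_empty_type
  obtain ⟨m, hm⟩ : ∃ m, m + i = n := ⟨n - i, Nat.sub_add_cancel hin⟩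
  set tc := compl (hm.trans (Fintype.card_fin n).symm)
  rw [Fintype.linearIndependent_iff]
  intro g hg t
  have hkill : ∀ s ≠ t, ιMulti_family k m x (tc t) • g s • ιMulti_family k i x s • w = 0 := by
    intro s hst
    have hndisj : ¬ Disjoint (tc t).val s.val := by
      intro hdisj
      refine hst (eq_iff_subset.mpr fun j hj => ?_)
      by_contra hjt
      exact Finset.disjoint_left.mp hdisj (by simpa [tc] using hjt) hj
    rw [smul_comm, smul_smul, ιMulti_family_mul_of_not_disjoint k x _ _ hndisj, zero_smul,
      smul_zero]
  obtain ⟨ε, hε⟩ := exists_ιMulti_family_compl_mul (R := k) hm x t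
  have hsum := congrArg (ιMulti_family k m x (tc t) • ·) hg
  simp only [Finset.smul_sum, smul_zero] at hsum
  rw [Finset.sum_eq_single t (fun s _ hst => hkill s hst) (by simp), smul_comm, smul_smul, hε,
    smul_assoc] at hsum
  simpa [smul_eq_zero_iff_eq, hw] using hsum

section GradedCyclic

variable {k : Type} [Field k] {V : Type} [AddCommGroup V] [Module k V]
  {A : Type} [AddCommGroup A] [Module k A]
  [Module (ExteriorAlgebra k V) A] [IsScalarTower k (ExteriorAlgebra k V) A]
  {Agr : ℤ → Submodule k A}

theorem ιMulti_smul_mem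
    (hdeg : ∀ (a : V) (i : ℤ), Submodule.map (extMul k V A a) (Agr i) ≤ Agr (i - 1))
    {m : ℕ} (x : Fin m → V) {d : ℤ} {p : A} (hp : p ∈ Agr d) :
    ιMulti k m x • p ∈ Agr (d - m) := by
  induction m generalizing d with
  | zero => simpa using hp
  | succ m ih =>
    rw [ιMulti_succ_apply, mul_smul, Nat.cast_succ, ← sub_sub]
    exact hdeg (x 0) _ (Submodule.mem_map_of_mem (ih (Matrix.vecTail x) hp))

theorem span_ιMulti_smul_eq_top {v : A}
    (hv : Submodule.span (ExteriorAlgebra k V) {v} = ⊤) :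
    Submodule.span k (Set.range fun x : Σ m, (Fin m → V) => ιMulti k x.1 x.2 • v) = ⊤ := by
  let act := (LinearMap.toSpanSingleton (ExteriorAlgebra k V) A v).restrictScalars k
  have hact : LinearMap.range act = ⊤ := by
    rw [LinearMap.range_restrictScalars, ← LinearMap.span_singleton_eq_range, hv,
      Submodule.restrictScalars_top]
  rw [← hact, ← Submodule.map_top, ← ιMulti_span, Submodule.map_span, ← Set.range_comp]
  rfl

theorem exists_ιMulti_smul_ne_zero (hgrading : DirectSum.IsInternal Agr)
    (hdeg : ∀ (a : V) (i : ℤ), Submodule.map (extMul k V A a) (Agr i) ≤ Agr (i - 1))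
    {v : A} (hv0 : v ∈ Agr 0) (hv : Submodule.span (ExteriorAlgebra k V) {v} = ⊤)
    {n : ℕ} (hn : Agr (-n) ≠ ⊥) :
    ∃ x : Fin n → V, ιMulti k n x • v ≠ 0 := by
  by_contra! hzero
  have hspan : ⊤ ≤ ⨆ (j : ℤ) (_ : j ≠ -n), Agr j := by
    rw [← span_ιMulti_smul_eq_top hv, Submodule.span_le]
    rintro _ ⟨⟨m, x⟩, rfl⟩
    by_cases hmn : m = n
    · subst hmn
      simp [hzero x]
    · have hne : -(m : ℤ) ≠ -n := by simpa using hmn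
      exact le_iSup₂ (f := fun j (_ : j ≠ -(n : ℤ)) => Agr j) _ hne
        (by simpa using ιMulti_smul_mem hdeg x hv0)
  exact hn (disjoint_top.mp ((hgrading.submodule_iSupIndep (-n)).mono_right hspan))

end GradedCyclic

theorem stmt11_general (k : Type) [Field k]
    (V : Type) [AddCommGroup V] [Module k V]
    (A : Type) [AddCommGroup A] [Module k A]
    [Module (ExteriorAlgebra k V) A] [IsScalarTower k (ExteriorAlgebra k V) A]
    [FiniteDimensional k A]
    (Agr : ℤ → Submodule k A)
    (hgrading : DirectSum.IsInternal Agr)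
    (hdeg : ∀ (a : V) (i : ℤ), Submodule.map (extMul k V A a) (Agr i) ≤ Agr (i - 1))
    (hcyclic : ∃ v : A, v ∈ Agr 0 ∧ Submodule.span (ExteriorAlgebra k V) {v} = ⊤)
    (n : ℕ)
    (hsocle : Agr (-(n : ℤ)) ≠ ⊥)
    (i : ℕ) :
    n.choose i ≤ Module.finrank k (Agr (-(i : ℤ))) := by
  obtain ⟨v, hv0, hv⟩ := hcyclic
  obtain ⟨x, hx⟩ := exists_ιMulti_smul_ne_zero hgrading hdeg hv0 hv hsocle
  let family (s : Set.powersetCard (Fin n) i) : Agr (-(i : ℤ)) :=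
    ⟨ιMulti_family k i x s • v, by simpa using ιMulti_smul_mem hdeg _ hv0⟩
  have hfamily : LinearIndependent k family :=
    .of_comp (Agr _).subtype (linearIndependent_ιMulti_family_smul x hx i)
  have hcard := hfamily.fintype_card_le_finrank
  rwa [← Nat.card_eq_fintype_card, Set.powersetCard.card, Nat.card_fin] at hcard

/-- Let `A = E/I` be a finite-dimensional cyclic graded module over the
exterior algebra `E = ⋀V` (graded cohomologically, so the internal homological grading
`Agr : ℤ → Submodule k A` has `A^c = Agr (-c)`, with `V` acting in degree `-1` and the
cyclic generator in degree `0`), with socle degree `n` (`A^n ≠ 0` and `A^j = 0` for `j > n`).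
If `A` has the EPY property (`H_i(L(A(-n))) = 0` for `i ≠ 0`, i.e. vanishing of
`H_j(L(A))` for `j ≠ -n` in the unshifted grading), then `dim_k A^i ≥ C(n,i)` for all
`0 ≤ i ≤ n`. -/
theorem stmt11 (k : Type) [Field k] (ι : Type) [Fintype ι] [DecidableEq ι]
    (V : Type) [AddCommGroup V] [Module k V] (b : Module.Basis ι k V)
    (A : Type) [AddCommGroup A] [Module k A]
    [Module (ExteriorAlgebra k V) A] [IsScalarTower k (ExteriorAlgebra k V) A]
    [FiniteDimensional k A]
    (Agr : ℤ → Submodule k A)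
    (hgrading : DirectSum.IsInternal Agr)
    (hdeg : ∀ (a : V) (i : ℤ), Submodule.map (extMul k V A a) (Agr i) ≤ Agr (i - 1))
    (hcyclic : ∃ v : A, v ∈ Agr 0 ∧ Submodule.span (ExteriorAlgebra k V) {v} = ⊤)
    (hhigh : ∀ i : ℤ, 0 < i → Agr i = ⊥)
    (n : ℕ)
    (hsocle : Agr (-(n : ℤ)) ≠ ⊥)
    (hbot : ∀ i : ℤ, i < -(n : ℤ) → Agr i = ⊥)
    (hEPY : ∀ i : ℤ, i ≠ -(n : ℤ) →
      Submodule.baseChange (MvPolynomial ι k) (Agr i) ⊓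
          LinearMap.ker (bggDifferential k ι V b A) ≤
        Submodule.map (bggDifferential k ι V b A)
          (Submodule.baseChange (MvPolynomial ι k) (Agr (i + 1))))
    (i : ℕ) (hin : i ≤ n) :
    n.choose i ≤ Module.finrank k (Agr (-(i : ℤ))) :=
  stmt11_general k V A Agr hgrading hdeg hcyclic n hsocle i
end

section
/- Let k be a field, V a finite-dimensional k-vector space, E = ⋀V, and S = Sym(V^*). Let A = E/I be a finite-dimensional cohomologically graded quotient of E with socle degree n having the EPY property. Then the resonance varieties of A propagate: R^i(A) ⊆ R^{i+1}(A) for all 0 ≤ i < n; that is, for every a ∈ V and all integers 0 ≤ p ≤ q ≤ n, if H^p(A, a·) ≠ 0 then H^q(A, a·) ≠ 0. -/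
/-!
Write `J` for the maximal ideal of `S` at the point `a ∈ V`. Specializing `L(A)` at `a` gives
the complex `(A, a·)`, and `d - 1 ⊗ (a·)` raises the `J`-adic order. Hence if `H^{c+1}(A, a·) = 0`,
a cycle `z ∈ A^c` of `(A, a·)` lifts, one order at a time, to elements `w ≡ 1 ⊗ z (mod J)` of
`S ⊗ A^c` whose boundaries `d w` have arbitrarily high `J`-adic order, and the Artin–Rees lemma
corrects such a `w` to a genuine cycle of `L(A)`. For `c < n` the EPY property makes this cycle a
boundary `d u`, and specializing at `a` gives `z = a · u(a)`. So `H^{c+1}(A, a·) = 0` forces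
`H^c(A, a·) = 0`, which is the contrapositive of propagation.
-/

open TensorProduct

section BaseChange

variable {k R A B : Type*} [CommRing k] [CommRing R] [Algebra k R]
  [AddCommGroup A] [Module k A] [AddCommGroup B] [Module k B]

namespace Submodule

lemma baseChange_le_of_one_tmul_mem {W : Submodule k A} {N : Submodule R (R ⊗[k] A)}
    (h : ∀ w ∈ W, (1 : R) ⊗ₜ[k] w ∈ N) : W.baseChange R ≤ N := by
  rw [baseChange_eq_span, span_le]
  rintro - ⟨w, hw, rfl⟩
  exact h w hw

lemma map_baseChange (f : A →ₗ[k] B) (W : Submodule k A) :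
    (W.baseChange R).map (f.baseChange R) = (W.map f).baseChange R := by
  rw [baseChange_eq_span, baseChange_eq_span, map_span]
  congr 1
  ext
  simp

lemma baseChange_sup (W W' : Submodule k A) :
    (W ⊔ W').baseChange R = W.baseChange R ⊔ W'.baseChange R := by
  refine le_antisymm (baseChange_le_of_one_tmul_mem fun w hw => ?_)
    (sup_le (baseChange_mono R le_sup_left) (baseChange_mono R le_sup_right))
  obtain ⟨u, hu, u', hu', rfl⟩ := mem_sup.mp hw
  rw [tmul_add]
  exact add_mem (mem_sup_left (tmul_mem_baseChange_of_mem _ hu))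
    (mem_sup_right (tmul_mem_baseChange_of_mem _ hu'))

lemma map_pow_smul_le {M : Type*} [AddCommGroup M] [Module R M] {g : M →ₗ[R] M}
    {J : Ideal R} {N N' : Submodule R M} (h : N.map g ≤ J • N') (m : ℕ) :
    (J ^ m • N).map g ≤ J ^ (m + 1) • N' := by
  rw [map_smul'', pow_succ, Submodule.mul_smul]
  exact smul_mono le_rfl h

end Submodule

end BaseChange

section Splitting

variable {k R A B : Type*} [Field k] [CommRing R] [Algebra k R]
  [AddCommGroup A] [Module k A] [AddCommGroup B] [Module k B]

lemma mem_smul_baseChange_of_baseChange_mem_smul_top {f : A →ₗ[k] B} {G : Submodule k A}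
    (hG : Disjoint G (LinearMap.ker f)) {I : Ideal R} {x : R ⊗[k] A}
    (hx : x ∈ G.baseChange R)
    (hfx : f.baseChange R x ∈ (I • ⊤ : Submodule R (R ⊗[k] B))) :
    x ∈ I • G.baseChange R := by
  obtain ⟨g, hg⟩ := (f ∘ₗ G.subtype).exists_leftInverse_of_injective
    (by rwa [LinearMap.ker_comp, ← Submodule.disjoint_iff_comap_eq_bot])
  set Λ := (G.subtype ∘ₗ g).baseChange R
  obtain ⟨y, rfl⟩ := hx
  have hΛ : Λ (f.baseChange R (G.subtype.baseChange R y)) = G.subtype.baseChange R y := by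
    simp only [Λ, ← LinearMap.comp_apply, ← LinearMap.baseChange_comp, LinearMap.comp_assoc, hg,
      LinearMap.comp_id]
  have hrange : (⊤ : Submodule R (R ⊗[k] B)).map Λ ≤ G.baseChange R := by
    rw [Submodule.map_top]
    simp only [Λ, LinearMap.baseChange_comp]
    exact LinearMap.range_comp_le_range _ _
  rw [← hΛ]
  exact Submodule.smul_mono le_rfl hrange
    (Submodule.map_smul'' I ⊤ Λ ▸ Submodule.mem_map_of_mem hfx)

lemma exists_sub_baseChange_mem_smul {f : A →ₗ[k] A} {U U' : Submodule k A}
    (hK : U ⊓ LinearMap.ker f ≤ U'.map f) {I₁ I₂ : Ideal R} {E : R ⊗[k] A}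
    (hE : E ∈ I₁ • U.baseChange R)
    (hfE : f.baseChange R E ∈ (I₂ • ⊤ : Submodule R (R ⊗[k] A))) :
    ∃ v ∈ I₁ • U'.baseChange R, E - f.baseChange R v ∈ I₂ • U.baseChange R := by
  -- Split `U = K ⊕ (C ⊓ U)`: the `K`-part of `E` is hit by `f`, and `f` is injective on `C ⊓ U`.
  set K := U ⊓ LinearMap.ker f
  obtain ⟨C, hC⟩ := Submodule.exists_isCompl K
  have hU : K ⊔ C ⊓ U = U := by
    rw [← sup_inf_assoc_of_le C inf_le_left, hC.sup_eq_top, top_inf_eq]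
  have hG : Disjoint (C ⊓ U) (LinearMap.ker f) := by
    rw [disjoint_iff, inf_assoc, ← disjoint_iff]
    exact hC.disjoint.symm
  rw [← hU, Submodule.baseChange_sup, Submodule.smul_sup] at hE
  obtain ⟨E₁, hE₁, E₂, hE₂, rfl⟩ := Submodule.mem_sup.mp hE
  have hfE₁ : f.baseChange R E₁ = 0 := by
    have : (K.baseChange R).map (f.baseChange R) = ⊥ := by
      rw [Submodule.map_baseChange, LinearMap.le_ker_iff_map.mp inf_le_right,
        Submodule.baseChange_bot]
    have h := Submodule.mem_map_of_mem (f := f.baseChange R) (Submodule.smul_le_right hE₁)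
    rwa [this, Submodule.mem_bot] at h
  have hE₂' : E₂ ∈ I₂ • (C ⊓ U).baseChange R := by
    refine mem_smul_baseChange_of_baseChange_mem_smul_top hG (Submodule.smul_le_right hE₂) ?_
    rwa [map_add, hfE₁, zero_add] at hfE
  have hK' : I₁ • K.baseChange R ≤ (I₁ • U'.baseChange R).map (f.baseChange R) := by
    rw [Submodule.map_smul'', Submodule.map_baseChange]
    exact Submodule.smul_mono le_rfl (Submodule.baseChange_mono R hK)
  obtain ⟨v, hv, hvE₁⟩ := hK' hE₁
  refine ⟨v, hv, ?_⟩
  rw [hvE₁, add_sub_cancel_left]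
  exact Submodule.smul_mono le_rfl (Submodule.baseChange_mono R inf_le_right) hE₂'

end Splitting

section Approximation

variable {k R A : Type*} [Field k] [CommRing R] [Algebra k R] [AddCommGroup A] [Module k A]
  {d : R ⊗[k] A →ₗ[R] R ⊗[k] A} {f : A →ₗ[k] A} {J : Ideal R} {U U' : Submodule k A}

lemma exists_lift_apply_mem_pow_smul (hdd : d ∘ₗ d = 0)
    (hdU' : (U'.baseChange R).map (d - f.baseChange R) ≤ J • U.baseChange R)
    (hdU : (U.baseChange R).map (d - f.baseChange R) ≤ J • ⊤)
    (hK : U ⊓ LinearMap.ker f ≤ U'.map f) {z : A} (hz : z ∈ U') (hfz : f z = 0) (m : ℕ) :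
    ∃ w ∈ U'.baseChange R, w - 1 ⊗ₜ z ∈ J • U'.baseChange R ∧
      d w ∈ J ^ (m + 1) • U.baseChange R := by
  induction m with
  | zero =>
    refine ⟨1 ⊗ₜ z, Submodule.tmul_mem_baseChange_of_mem _ hz, by simp, ?_⟩
    have h := hdU' (Submodule.mem_map_of_mem (Submodule.tmul_mem_baseChange_of_mem 1 hz))
    rwa [LinearMap.sub_apply, LinearMap.baseChange_tmul, hfz, tmul_zero, sub_zero,
      ← pow_one J] at h
  | succ m ih =>
    obtain ⟨w, hw, hwz, hdw⟩ := ih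
    have hfdw : f.baseChange R (d w) ∈ (J ^ (m + 2) • ⊤ : Submodule R (R ⊗[k] A)) := by
      have h := Submodule.map_pow_smul_le hdU _ (Submodule.mem_map_of_mem hdw)
      rwa [LinearMap.sub_apply, ← LinearMap.comp_apply, hdd, LinearMap.zero_apply, zero_sub,
        Submodule.neg_mem_iff] at h
    obtain ⟨v, hv, hdwv⟩ := exists_sub_baseChange_mem_smul hK hdw hfdw
    refine ⟨w - v, sub_mem hw (Submodule.smul_le_right hv), ?_, ?_⟩
    · rw [sub_right_comm]
      exact sub_mem hwz (Submodule.smul_mono_left (Ideal.pow_le_self m.succ_ne_zero) hv)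
    · have h := Submodule.map_pow_smul_le hdU' _ (Submodule.mem_map_of_mem hv)
      rw [map_sub, show d w - d v = (d w - f.baseChange R v) - (d - f.baseChange R) v by
        simp only [LinearMap.sub_apply]; abel]
      exact sub_mem hdwv h

lemma exists_lift_mem_ker [IsNoetherianRing R] [Module.Finite R (R ⊗[k] A)]
    (hdd : d ∘ₗ d = 0)
    (hdU' : (U'.baseChange R).map (d - f.baseChange R) ≤ J • U.baseChange R)
    (hdU : (U.baseChange R).map (d - f.baseChange R) ≤ J • ⊤)
    (hK : U ⊓ LinearMap.ker f ≤ U'.map f) {z : A} (hz : z ∈ U') (hfz : f z = 0) :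
    ∃ w ∈ U'.baseChange R, d w = 0 ∧ w - 1 ⊗ₜ z ∈ J • U'.baseChange R := by
  obtain ⟨m, hm⟩ := J.exists_pow_inf_eq_pow_smul ((U'.baseChange R).map d)
  obtain ⟨w, hw, hwz, hdw⟩ := exists_lift_apply_mem_pow_smul hdd hdU' hdU hK hz hfz m
  have hdw' : d w ∈ (J • U'.baseChange R).map d := by
    have h : d w ∈ J ^ (m + 1) • ⊤ ⊓ (U'.baseChange R).map d :=
      ⟨Submodule.smul_mono le_rfl le_top hdw, Submodule.mem_map_of_mem hw⟩
    rw [hm (m + 1) m.le_succ, Nat.add_sub_cancel_left, pow_one] at h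
    rw [Submodule.map_smul'']
    exact Submodule.smul_mono le_rfl inf_le_right h
  obtain ⟨v, hv, hdv⟩ := hdw'
  refine ⟨w - v, sub_mem hw (Submodule.smul_le_right hv), by rw [map_sub, hdv, sub_self], ?_⟩
  rw [sub_right_comm]
  exact sub_mem hwz hv

end Approximation

section Specialization

variable {k R A B : Type*} [CommRing k] [CommRing R] [Algebra k R]
  [AddCommGroup A] [Module k A] [AddCommGroup B] [Module k B] (φ : R →ₐ[k] k)

noncomputable def specializeAt : R ⊗[k] A →ₗ[k] A :=
  TensorProduct.lid k A ∘ₗ φ.toLinearMap.rTensor A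

@[simp] lemma specializeAt_tmul (r : R) (x : A) : specializeAt φ (r ⊗ₜ[k] x) = φ r • x := rfl

lemma specializeAt_smul (r : R) (x : R ⊗[k] A) :
    specializeAt φ (r • x) = φ r • specializeAt φ x := by
  induction x using TensorProduct.induction_on with
  | zero => simp
  | tmul s y => simp [smul_tmul', mul_smul]
  | add x y hx hy => rw [smul_add, map_add, hx, hy, map_add, smul_add]

lemma specializeAt_baseChange (g : A →ₗ[k] B) (x : R ⊗[k] A) :
    specializeAt φ (g.baseChange R x) = g (specializeAt φ x) := by
  induction x using TensorProduct.induction_on with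
  | zero => simp
  | tmul s y => simp
  | add x y hx hy => rw [map_add, map_add, hx, hy, map_add, map_add]

lemma specializeAt_mem_of_mem_baseChange {W : Submodule k A} {x : R ⊗[k] A}
    (hx : x ∈ W.baseChange R) : specializeAt φ x ∈ W := by
  obtain ⟨y, rfl⟩ := hx
  rw [specializeAt_baseChange]
  exact (specializeAt φ y).2

lemma specializeAt_eq_zero_of_mem_ker_smul {N : Submodule R (R ⊗[k] A)} {x : R ⊗[k] A}
    (hx : x ∈ RingHom.ker φ • N) : specializeAt φ x = 0 :=
  Submodule.smul_induction_on hx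
    (fun r hr y _ => by rw [specializeAt_smul, RingHom.mem_ker.mp hr, zero_smul])
    (fun x y hx hy => by rw [map_add, hx, hy, add_zero])

end Specialization

section ExteriorAction

variable {k V P : Type*} [CommRing k] [AddCommGroup V] [Module k V] [AddCommGroup P]
  [Module (ExteriorAlgebra k V) P]

local notation "ε" => ExteriorAlgebra.ι k

lemma ι_smul_ι_smul_add_swap (x y : V) (p : P) : ε x • ε y • p + ε y • ε x • p = 0 := by
  rw [smul_smul, smul_smul, ← add_smul, ExteriorAlgebra.ι_add_mul_swap, zero_smul]

lemma ι_smul_ι_smul_self (x : V) (p : P) : ε x • ε x • p = 0 := by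
  rw [smul_smul, ExteriorAlgebra.ι_sq_zero, zero_smul]

lemma sum_repr_smul_ι_smul [Module k P] [IsScalarTower k (ExteriorAlgebra k V) P] {ι : Type*}
    [Fintype ι] (b : Module.Basis ι k V) (a : V) (p : P) :
    ∑ j, b.repr a j • ε (b j) • p = ε a • p := by
  simp_rw [← smul_assoc, ← Finset.sum_smul, ← map_smul, ← map_sum, b.sum_repr]

end ExteriorAction

lemma Finset.sum_sum_eq_zero_of_add_swap {ι M : Type*} [Fintype ι] [AddCommGroup M]
    (f : ι → ι → M) (hf : ∀ i j, f i j + f j i = 0) (hdiag : ∀ i, f i i = 0) :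
    ∑ i, ∑ j, f i j = 0 := by
  rw [← Finset.sum_product']
  refine Finset.sum_involution (fun x _ => x.swap) (fun x _ => hf x.1 x.2) ?_
    (fun _ _ => Finset.mem_univ _) (fun _ _ => rfl)
  rintro ⟨i, j⟩ - hij h
  obtain rfl : j = i := congrArg Prod.fst h
  exact hij (hdiag j)

section BGG

open MvPolynomial

variable {k : Type} [Field k] {ι : Type} [Fintype ι] [DecidableEq ι]
  {V : Type} [AddCommGroup V] [Module k V] (b : Module.Basis ι k V)
  {P : Type} [AddCommGroup P] [Module k P]
  [Module (ExteriorAlgebra k V) P] [IsScalarTower k (ExteriorAlgebra k V) P]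

local notation "ε" => ExteriorAlgebra.ι k

@[simp] lemma extMul_apply (a : V) (p : P) : extMul k V P a p = ε a • p := rfl

lemma bggDifferential_tmul (s : MvPolynomial ι k) (p : P) :
    bggDifferential k ι V b P (s ⊗ₜ p) = ∑ j, (X j * s) ⊗ₜ (ε (b j) • p) := by
  simp [bggDifferential, LinearMap.sum_apply]

lemma bggDifferential_comp_self :
    bggDifferential k ι V b P ∘ₗ bggDifferential k ι V b P = 0 := by
  ext p
  simp only [AlgebraTensorModule.curry_apply, curry_apply, LinearMap.restrictScalars_apply,
    LinearMap.comp_apply, LinearMap.zero_apply, bggDifferential_tmul, map_sum, mul_one]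
  refine Finset.sum_sum_eq_zero_of_add_swap _ (fun i j => ?_) (fun i => ?_)
  · rw [mul_comm (X i), ← tmul_add, ι_smul_ι_smul_add_swap, tmul_zero]
  · rw [ι_smul_ι_smul_self, tmul_zero]

lemma bggDifferential_one_tmul_sub (a : V) (p : P) :
    bggDifferential k ι V b P (1 ⊗ₜ p) - 1 ⊗ₜ (ε a • p) =
      ∑ j, (X j - C (b.repr a j)) • (1 ⊗ₜ[k] (ε (b j) • p) : MvPolynomial ι k ⊗[k] P) := by
  rw [bggDifferential_tmul, ← sum_repr_smul_ι_smul b a p, tmul_sum, ← Finset.sum_sub_distrib]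
  refine Finset.sum_congr rfl fun j _ => ?_
  rw [smul_tmul', smul_eq_mul, mul_one, mul_one, sub_tmul, C_eq_smul_one, smul_tmul]

lemma map_bggDifferential_sub_baseChange_le (a : V) {W W' : Submodule k P}
    (hW : ∀ j, W.map (extMul k V P (b j)) ≤ W') :
    (W.baseChange (MvPolynomial ι k)).map
        (bggDifferential k ι V b P - (extMul k V P a).baseChange (MvPolynomial ι k)) ≤
      RingHom.ker (aeval (R := k) ⇑(b.repr a)) • W'.baseChange (MvPolynomial ι k) := by
  rw [Submodule.map_le_iff_le_comap]
  refine Submodule.baseChange_le_of_one_tmul_mem fun w hw => ?_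
  rw [Submodule.mem_comap, LinearMap.sub_apply, LinearMap.baseChange_tmul, extMul_apply,
    bggDifferential_one_tmul_sub]
  refine Submodule.sum_mem _ fun j _ => Submodule.smul_mem_smul ?_
    (Submodule.tmul_mem_baseChange_of_mem _ (hW j ⟨w, hw, rfl⟩))
  simp [RingHom.mem_ker]

lemma specializeAt_bggDifferential (a : V) (x : MvPolynomial ι k ⊗[k] P) :
    specializeAt (aeval ⇑(b.repr a)) (bggDifferential k ι V b P x) =
      ε a • specializeAt (aeval ⇑(b.repr a)) x := by
  have h := map_bggDifferential_sub_baseChange_le b a (W := ⊤) (W' := ⊤) (fun _ => le_top)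
    (Submodule.mem_map_of_mem (by simp : x ∈ (⊤ : Submodule k P).baseChange _))
  have := specializeAt_eq_zero_of_mem_ker_smul _ h
  rwa [LinearMap.sub_apply, map_sub, specializeAt_baseChange, sub_eq_zero] at this

end BGG

section Resonance

open MvPolynomial

variable {k : Type} [Field k] {ι : Type} [Fintype ι] [DecidableEq ι]
  {V : Type} [AddCommGroup V] [Module k V] (b : Module.Basis ι k V)
  {A : Type} [AddCommGroup A] [Module k A]
  [Module (ExteriorAlgebra k V) A] [IsScalarTower k (ExteriorAlgebra k V) A]

/-- `H^c(A, a·) = 0`, where `A^c = Agr (-c)`. -/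
def AomotoExactAt (Agr : ℤ → Submodule k A) (a : V) (c : ℤ) : Prop :=
  Agr (-c) ⊓ LinearMap.ker (extMul k V A a) ≤ (Agr (1 - c)).map (extMul k V A a)

theorem AomotoExactAt.of_add_one [FiniteDimensional k A] {Agr : ℤ → Submodule k A}
    (hdeg : ∀ (a : V) (i : ℤ), (Agr i).map (extMul k V A a) ≤ Agr (i - 1)) {n : ℕ}
    (hEPY : ∀ i : ℤ, i ≠ -(n : ℤ) →
      Submodule.baseChange (MvPolynomial ι k) (Agr i) ⊓
          LinearMap.ker (bggDifferential k ι V b A) ≤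
        Submodule.map (bggDifferential k ι V b A)
          (Submodule.baseChange (MvPolynomial ι k) (Agr (i + 1))))
    {a : V} {c : ℤ} (hc : c ≠ n) (h : AomotoExactAt Agr a (c + 1)) :
    AomotoExactAt Agr a c := by
  rintro z ⟨hz, hfz⟩
  set φ := aeval (R := k) ⇑(b.repr a)
  rw [AomotoExactAt, show -(c + 1) = -c - 1 by ring, show 1 - (c + 1) = -c by ring] at h
  have hdU := map_bggDifferential_sub_baseChange_le b a (W := Agr (-c - 1)) (W' := ⊤)
    fun _ => le_top
  rw [Submodule.baseChange_top] at hdU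
  obtain ⟨w, hw, hdw, hwz⟩ := exists_lift_mem_ker (bggDifferential_comp_self b)
    (map_bggDifferential_sub_baseChange_le b a fun j => hdeg (b j) (-c)) hdU h hz hfz
  obtain ⟨u, hu, rfl⟩ := hEPY (-c) (by omega) ⟨hw, hdw⟩
  refine ⟨specializeAt φ u, ?_, ?_⟩
  · rw [show 1 - c = -c + 1 by ring]
    exact specializeAt_mem_of_mem_baseChange φ hu
  · have hzu := specializeAt_eq_zero_of_mem_ker_smul φ hwz
    rwa [map_sub, specializeAt_bggDifferential, specializeAt_tmul, map_one, one_smul,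
      sub_eq_zero] at hzu

end Resonance

theorem stmt12_general (k : Type) [Field k] (ι : Type) [Fintype ι] [DecidableEq ι]
    (V : Type) [AddCommGroup V] [Module k V] (b : Module.Basis ι k V)
    (A : Type) [AddCommGroup A] [Module k A]
    [Module (ExteriorAlgebra k V) A] [IsScalarTower k (ExteriorAlgebra k V) A]
    [FiniteDimensional k A]
    (Agr : ℤ → Submodule k A)
    (hdeg : ∀ (a : V) (i : ℤ), Submodule.map (extMul k V A a) (Agr i) ≤ Agr (i - 1))
    (n : ℕ)
    (hEPY : ∀ i : ℤ, i ≠ -(n : ℤ) →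
      Submodule.baseChange (MvPolynomial ι k) (Agr i) ⊓
          LinearMap.ker (bggDifferential k ι V b A) ≤
        Submodule.map (bggDifferential k ι V b A)
          (Submodule.baseChange (MvPolynomial ι k) (Agr (i + 1))))
    (a : V) (p q : ℕ) (hpq : p ≤ q) (hqn : q ≤ n)
    (hp : ¬ (Agr (-(p : ℤ)) ⊓ LinearMap.ker (extMul k V A a) ≤
        Submodule.map (extMul k V A a) (Agr (1 - (p : ℤ))))) :
    ¬ (Agr (-(q : ℤ)) ⊓ LinearMap.ker (extMul k V A a) ≤
        Submodule.map (extMul k V A a) (Agr (1 - (q : ℤ)))) := by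
  intro hq
  refine hp (Nat.decreasingInduction (motive := fun m _ => AomotoExactAt Agr a m)
    (fun m hm hexact => ?_) hq hpq)
  push_cast at hexact
  exact hexact.of_add_one b hdeg hEPY (by omega)

/-- **Statement 12.** Let `A = E/I` be a finite-dimensional cyclic graded module over the
exterior algebra `E = ⋀V` (graded cohomologically, so the internal homological grading
`Agr : ℤ → Submodule k A` has `A^c = Agr (-c)`, with `V` acting in degree `-1` and the
cyclic generator in degree `0`), with socle degree `n`, having the EPY property
(`H_i(L(A(-n))) = 0` for `i ≠ 0`, i.e. vanishing of `H_j(L(A))` for `j ≠ -n` in the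
unshifted grading).  Then the resonance varieties of `A` propagate: for every `a ∈ V` and
all `0 ≤ p ≤ q ≤ n`, if `H^p(A, a·) ≠ 0` then `H^q(A, a·) ≠ 0`, where `H^c(A, a·) ≠ 0` is
expressed as the failure of the inclusion `A^c ∩ ker(a·) ⊆ a · A^{c-1}`, that is,
`Agr (-c) ∩ ker(a·) ⊆ a · Agr (1 - c)`. -/
theorem stmt12 (k : Type) [Field k] (ι : Type) [Fintype ι] [DecidableEq ι]
    (V : Type) [AddCommGroup V] [Module k V] (b : Module.Basis ι k V)
    (A : Type) [AddCommGroup A] [Module k A]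
    [Module (ExteriorAlgebra k V) A] [IsScalarTower k (ExteriorAlgebra k V) A]
    [FiniteDimensional k A]
    (Agr : ℤ → Submodule k A)
    (hgrading : DirectSum.IsInternal Agr)
    (hdeg : ∀ (a : V) (i : ℤ), Submodule.map (extMul k V A a) (Agr i) ≤ Agr (i - 1))
    (hcyclic : ∃ v : A, v ∈ Agr 0 ∧ Submodule.span (ExteriorAlgebra k V) {v} = ⊤)
    (hhigh : ∀ i : ℤ, 0 < i → Agr i = ⊥)
    (n : ℕ)
    (hsocle : Agr (-(n : ℤ)) ≠ ⊥)
    (hbot : ∀ i : ℤ, i < -(n : ℤ) → Agr i = ⊥)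
    (hEPY : ∀ i : ℤ, i ≠ -(n : ℤ) →
      Submodule.baseChange (MvPolynomial ι k) (Agr i) ⊓
          LinearMap.ker (bggDifferential k ι V b A) ≤
        Submodule.map (bggDifferential k ι V b A)
          (Submodule.baseChange (MvPolynomial ι k) (Agr (i + 1))))
    (a : V) (p q : ℕ) (hpq : p ≤ q) (hqn : q ≤ n)
    (hp : ¬ (Agr (-(p : ℤ)) ⊓ LinearMap.ker (extMul k V A a) ≤
        Submodule.map (extMul k V A a) (Agr (1 - (p : ℤ))))) :
    ¬ (Agr (-(q : ℤ)) ⊓ LinearMap.ker (extMul k V A a) ≤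
        Submodule.map (extMul k V A a) (Agr (1 - (q : ℤ)))) :=
  stmt12_general k ι V b A Agr hdeg n hEPY a p q hpq hqn hp
end

section
/- Let L be a simplicial complex on vertex set [m], and for each i ∈ [m] let K_i be a simplicial complex on vertex set V_i, where V_1, …, V_m are pairwise disjoint finite sets. For each i ∈ [m] and j ∈ V_i let (X_{ij}, A_{ij}) be a pair of topological spaces with A_{ij} ⊆ X_{ij} nonempty. For each i set Y_i := Z_{K_i}((X_{ij})_{j∈V_i}, (A_{ij})_{j∈V_i}) ⊆ ∏_{j∈V_i} X_{ij} and B_i := ∏_{j∈V_i} A_{ij}. Then, inside the product ∏_{i∈[m]} ∏_{j∈V_i} X_{ij}, the polyhedral product Z_L((Y_i), (B_i)) is equal (as a subspace, under the canonical identification of ∏_i ∏_{j∈V_i} X_{ij} with ∏_{j∈V} X_j for V = ⋃_i V_i) to the polyhedral product Z_{L∘(K_1,…,K_m)}((X_{ij}), (A_{ij})). -/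
/-- A simplicial complex on a vertex set `W`: a collection of subsets of `W` closed under
taking subsets and containing the empty set. -/
def IsSimplicialComplexOn {W : Type} (L : Set (Set W)) : Prop :=
  (∅ : Set W) ∈ L ∧ ∀ σ ∈ L, ∀ τ : Set W, τ ⊆ σ → τ ∈ L

/-- The polyhedral product of the family of pairs `(Xs i, A i)` of subsets of `X i`
determined by the collection `L` of subsets of `ι`:
`Z_L((Xs i), (A i)) = ⋃_{τ ∈ L} ∏_i Y_{τ,i}`, where `Y_{τ,i} = Xs i` if `i ∈ τ` and
`Y_{τ,i} = A i` otherwise, viewed inside the ambient product `∏ i, X i`. -/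
def polyhedralProduct {ι : Type} {X : ι → Type} (L : Set (Set ι))
    (Xs : ∀ i, Set (X i)) (A : ∀ i, Set (X i)) : Set (∀ i, X i) :=
  {f | ∃ τ ∈ L, ∀ i, (i ∈ τ → f i ∈ Xs i) ∧ (i ∉ τ → f i ∈ A i)}

/-- The composition `L ∘ (K_1, …, K_m)` of simplicial complexes: `L` is a complex on the
vertex set `ι` and each `K i` is a complex on the vertex set `V i` (the disjoint union of the
`V i` being realized as the sigma type `Σ i, V i`).  Its simplices are exactly the sets
`⋃_{i ∈ τ} σ_i` with `τ ∈ L` and `σ_i ∈ K i` for `i ∈ τ`. -/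
def simplicialComposition {ι : Type} {V : ι → Type} (L : Set (Set ι))
    (K : ∀ i, Set (Set (V i))) : Set (Set (Σ i, V i)) :=
  {S | ∃ τ ∈ L, ∃ σ : ∀ i, Set (V i), (∀ i ∈ τ, σ i ∈ K i) ∧
    S = ⋃ i ∈ τ, Sigma.mk i '' σ i}

/-- **Statement 18.** Let `L` be a simplicial complex on `[m]`, and for each `i` let `K i` be a
simplicial complex on the finite vertex set `V i` (the `V i` pairwise disjoint, realized as a
sigma type).  For pairs of topological spaces `(X i j, A i j)` with each `A i j` nonempty, set
`Y i := Z_{K i}((X i j), (A i j)) ⊆ ∏ j, X i j` and `B i := ∏ j, A i j`.  Then, under the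
canonical identification of `∏ i, ∏ j, X i j` with `∏_{(i,j)} X i j`, the polyhedral product
`Z_L((Y i), (B i))` equals the polyhedral product `Z_{L∘(K_1,…,K_m)}((X i j), (A i j))`. -/
theorem stmt18 {m : ℕ} {V : Fin m → Type} [∀ i, Finite (V i)]
    {X : ∀ i, V i → Type} [∀ i j, TopologicalSpace (X i j)]
    (L : Set (Set (Fin m))) (hL : IsSimplicialComplexOn L)
    (K : ∀ i, Set (Set (V i))) (hK : ∀ i, IsSimplicialComplexOn (K i))
    (A : ∀ i j, Set (X i j)) (hA : ∀ i j, (A i j).Nonempty)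
    (f : ∀ i, ∀ j, X i j) :
    (f ∈ polyhedralProduct L
        (fun i => polyhedralProduct (K i) (fun j => (Set.univ : Set (X i j))) (A i))
        (fun i => Set.univ.pi (A i))) ↔
    ((fun p : Σ i, V i => f p.1 p.2) ∈
      polyhedralProduct (simplicialComposition L K)
        (fun p => (Set.univ : Set (X p.1 p.2))) (fun p => A p.1 p.2)) := by

  classical
  constructor
  · rintro ⟨τ, hτ, hf⟩
    choose σ hσK hσ using fun i (hi : i ∈ τ) => (hf i).1 hi
    set σ' : ∀ i, Set (V i) := fun i => if h : i ∈ τ then σ i h else ∅ with hσ'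
    have hmem : ∀ p : Σ i, V i,
        p ∈ (⋃ i ∈ τ, Sigma.mk i '' σ' i) ↔ p.1 ∈ τ ∧ p.2 ∈ σ' p.1 := by
      rintro ⟨i, j⟩
      simp only [Set.mem_iUnion, Set.mem_image]
      constructor
      · rintro ⟨i', hi', j', hj', heq⟩
        obtain ⟨rfl, h2⟩ := Sigma.mk.inj_iff.mp heq
        exact ⟨hi', by simpa using (heq_eq_eq _ _ ▸ h2) ▸ hj'⟩
      · rintro ⟨hi, hj⟩
        exact ⟨i, hi, j, hj, rfl⟩
    refine ⟨⋃ i ∈ τ, Sigma.mk i '' σ' i, ⟨τ, hτ, σ', fun i hi => by simp [hσ', dif_pos hi, hσK], rfl⟩, ?_⟩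
    rintro ⟨i, j⟩
    refine ⟨fun _ => trivial, fun hp => ?_⟩
    by_cases hi : i ∈ τ
    · have hj : j ∉ σ i hi := by
        intro hj
        exact hp ((hmem ⟨i, j⟩).mpr ⟨hi, by simp [hσ', dif_pos hi, hj]⟩)
      exact (hσ i hi j).2 hj
    · exact (hf i).2 hi j (Set.mem_univ j)
  · rintro ⟨S, ⟨τ, hτ, σ, hσK, rfl⟩, hf⟩
    have hmem : ∀ p : Σ i, V i,
        p ∈ (⋃ i ∈ τ, Sigma.mk i '' σ i) ↔ p.1 ∈ τ ∧ p.2 ∈ σ p.1 := by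
      rintro ⟨i, j⟩
      simp only [Set.mem_iUnion, Set.mem_image]
      constructor
      · rintro ⟨i', hi', j', hj', heq⟩
        obtain ⟨rfl, h2⟩ := Sigma.mk.inj_iff.mp heq
        exact ⟨hi', by simpa using (heq_eq_eq _ _ ▸ h2) ▸ hj'⟩
      · rintro ⟨hi, hj⟩
        exact ⟨i, hi, j, hj, rfl⟩
    refine ⟨τ, hτ, fun i => ⟨fun hi => ?_, fun hi => ?_⟩⟩
    · refine ⟨σ i, hσK i hi, fun j => ⟨fun _ => trivial, fun hj => ?_⟩⟩
      exact (hf ⟨i, j⟩).2 (fun h => hj ((hmem ⟨i, j⟩).mp h).2)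
    · intro j _
      exact (hf ⟨i, j⟩).2 (fun h => hi ((hmem ⟨i, j⟩).mp h).1)
end
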